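/- Let E be an effect algebra with compression base (J_p)_{p∈P} having the b-property. Then the C-blocks of E coincide with the maximal subsets of E consisting of pairwise commuting elements: every C-block C(B) is a maximal set of pairwise commuting elements of E, and every maximal set of pairwise commuting elements of E equals C(B) for some block B of P. -/
import Mathlib


/- Common definitions: effect algebras, compression bases, spectrality -/

attribute [local instance 0] Classical.propDecidable

universe u

structure EffectAlgebra (E : Type u) where
  padd : E → E → Option E
  zero : E
  one : E
  comm : ∀ a b, padd a b = padd b a
  assoc : ∀ a b c ab abc, padd a b = some ab → padd ab c = some abc →
      ∃ bc, padd b c = some bc ∧ padd a bc = some abc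
  orth_exists : ∀ a, ∃ x, padd a x = some one
  orth_unique : ∀ a x y, padd a x = some one → padd a y = some one → x = y
  add_one : ∀ a b, padd a one = some b → a = zero

namespace EffectAlgebra

variable {E : Type u} (EA : EffectAlgebra E)

/-- `a ⊥ b` and `a ⊕ b = c`. -/
def le (a b : E) : Prop := ∃ c, EA.padd a c = some b

/-- the orthosupplement `a'`. -/
noncomputable def compl (a : E) : E := (EA.orth_exists a).choose

/-- `b ⊖ a` (the element `c` with `a ⊕ c = b`, when it exists). -/
noncomputable def osub (b a : E) : E :=
  if h : ∃ c, EA.padd a c = some b then h.choose else EA.zero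

/-- the value of `a ⊕ b` (defaulting to `0` when undefined). -/
noncomputable def oplusD (a b : E) : E := (EA.padd a b).getD EA.zero

def IsSharp (a : E) : Prop := ∀ x, EA.le x a → EA.le x (EA.compl a) → x = EA.zero

/-- sub-effect algebra. -/
def SubEA (P : Set E) : Prop :=
  EA.zero ∈ P ∧ EA.one ∈ P ∧ (∀ a ∈ P, EA.compl a ∈ P) ∧
    ∀ a ∈ P, ∀ b ∈ P, ∀ c, EA.padd a b = some c → c ∈ P

/-- Mackey compatibility: `a = a₁ ⊕ c`, `b = b₁ ⊕ c` with `a₁ ⊕ b₁ ⊕ c` defined. -/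
def Mackey (a b : E) : Prop :=
  ∃ a1 b1 c d e, EA.padd a1 b1 = some d ∧ EA.padd d c = some e ∧
    EA.padd a1 c = some a ∧ EA.padd b1 c = some b

def Additive (J : E → E) : Prop :=
  ∀ a b c, EA.padd a b = some c → EA.padd (J a) (J b) = some (J c)

def Retraction (J : E → E) : Prop :=
  EA.Additive J ∧ ∀ a, EA.le a (J EA.one) → J a = a

def Compression (J : E → E) : Prop :=
  EA.Retraction J ∧ ∀ a, (J a = EA.zero ↔ EA.le a (EA.compl (J EA.one)))

/-- `I` is a supplement of `J`: `Ker J = ran I` and `Ker I = ran J`. -/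
def Supplement (I J : E → E) : Prop :=
  (∀ a, J a = EA.zero ↔ ∃ b, I b = a) ∧ (∀ a, I a = EA.zero ↔ ∃ b, J b = a)

/-- the `n`-fold sum `n·a`, when defined. -/
def nsmulE : ℕ → E → Option E
  | 0, _ => some EA.zero
  | n + 1, a => (nsmulE n a).bind fun b => EA.padd a b

def ArchimedeanEA : Prop :=
  ∀ a : E, (∀ n : ℕ, ∃ b, EA.nsmulE n a = some b) → a = EA.zero

/-- a state on an effect algebra. -/
def IsState (s : E → ℝ) : Prop :=
  s EA.one = 1 ∧ (∀ a, 0 ≤ s a ∧ s a ≤ 1) ∧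
    ∀ a b c, EA.padd a b = some c → s c = s a + s b

noncomputable def partialSum (f : ℕ → E) : ℕ → E
  | 0 => EA.zero
  | n + 1 => EA.oplusD (partialSum f n) (f n)

/-- σ-additivity of a state: if all partial sums of an orthogonal sequence are defined
and the orthosum (= supremum of the partial sums) exists, the state is countably additive. -/
def SigmaAdditive (s : E → ℝ) : Prop :=
  ∀ f : ℕ → E, ∀ b : E,
    (∀ n, ∃ c, EA.padd (EA.partialSum f n) (f n) = some c) →
    (∀ n, EA.le (EA.partialSum f n) b) →
    (∀ c, (∀ n, EA.le (EA.partialSum f n) c) → EA.le b c) →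
    Filter.Tendsto (fun n => ∑ i ∈ Finset.range n, s (f i)) Filter.atTop (nhds (s b))

/-- A compression base: a family of compressions indexed by a sub-effect algebra `P`
such that each `p ∈ P` is the focus of `J p`, and Mackey compatible projections
compose to a projection. -/
structure CompressionBase {E : Type u} (EA : EffectAlgebra E) where
  P : Set E
  J : E → E → E
  sub : EA.SubEA P
  compr : ∀ p ∈ P, EA.Compression (J p)
  focus : ∀ p ∈ P, J p EA.one = p
  mackey : ∀ p ∈ P, ∀ q ∈ P, EA.Mackey p q → ∃ r ∈ P, J p ∘ J q = J r

variable (CB : CompressionBase EA)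

/-- `a ∈ C(p)`:  `a = J_p(a) ⊕ J_{p'}(a)`. -/
def inC (a p : E) : Prop :=
  EA.padd (CB.J p a) (CB.J (EA.compl p) a) = some a

/-- `PC(a) = {p ∈ P : a ∈ C(p)}`. -/
def PC (a : E) : Set E := {p | p ∈ CB.P ∧ inC EA CB a p}

/-- the bicommutant `P(a)`. -/
def bicomm (a : E) : Set E :=
  {p | p ∈ PC EA CB a ∧ ∀ q ∈ PC EA CB a, inC EA CB p q}

/-- `PC(A)` for a set `A ⊆ E`. -/
def PCset (A : Set E) : Set E := {p | p ∈ CB.P ∧ ∀ a ∈ A, inC EA CB a p}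

/-- `P(Q) = PC(PC(Q) ∪ Q)`. -/
def Pset (Q : Set E) : Set E := PCset EA CB (PCset EA CB Q ∪ Q)

/-- `P_≤(e,f)`. -/
def Ple (e f : E) : Set E :=
  {p | p ∈ Pset EA CB {e, f} ∧ EA.le (CB.J p e) (CB.J p f) ∧
    EA.le (CB.J (EA.compl p) f) (CB.J (EA.compl p) e)}

/-- a Boolean subalgebra of `P`: a sub-effect algebra of `E` contained in `P`
whose elements are pairwise Mackey compatible, with witnesses inside. -/
def BooleanSub (B : Set E) : Prop :=
  B ⊆ CB.P ∧ EA.SubEA B ∧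
    ∀ p ∈ B, ∀ q ∈ B, ∃ p1 ∈ B, ∃ q1 ∈ B, ∃ c ∈ B, ∃ d e,
      EA.padd p1 q1 = some d ∧ EA.padd d c = some e ∧
      EA.padd p1 c = some p ∧ EA.padd q1 c = some q

/-- `a` is a b-element with associated Boolean subalgebra `B`. -/
def IsBElementWith (a : E) (B : Set E) : Prop :=
  BooleanSub EA CB B ∧ ∀ p ∈ CB.P, (inC EA CB a p ↔ ∀ b ∈ B, inC EA CB b p)

def IsBElement (a : E) : Prop := ∃ B, IsBElementWith EA CB a B

def BProperty : Prop := ∀ a : E, IsBElement EA CB a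

/-- commuting of b-elements: `e C f` iff `P(e) ↔ P(f)`. -/
def CommuteEl (e f : E) : Prop :=
  ∀ p ∈ bicomm EA CB e, ∀ q ∈ bicomm EA CB f, EA.Mackey p q

def BComparability : Prop :=
  BProperty EA CB ∧ ∀ e f : E, CommuteEl EA CB e f → (Ple EA CB e f).Nonempty

def IsProjCover (a p : E) : Prop :=
  p ∈ CB.P ∧ ∀ q ∈ CB.P, (EA.le a q ↔ EA.le p q)

def ProjCoverProp : Prop := ∀ a : E, ∃ p, IsProjCover EA CB a p

def Spectral : Prop := ProjCoverProp EA CB ∧ BComparability EA CB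

/-- a block of `P`: a maximal set of pairwise Mackey compatible projections. -/
def IsBlock (B : Set E) : Prop :=
  B ⊆ CB.P ∧ (∀ p ∈ B, ∀ q ∈ B, EA.Mackey p q) ∧
    ∀ B' : Set E, B' ⊆ CB.P → (∀ p ∈ B', ∀ q ∈ B', EA.Mackey p q) → B ⊆ B' → B' = B

/-- the C-block `C(B)`. -/
def Cblock (B : Set E) : Set E := {a | ∀ p ∈ B, inC EA CB a p}

/-- `(f − e)_+` (the positive part, defined when `P_≤(e,f)` is nonempty). -/
noncomputable def posPart (e f : E) : E :=
  if h : (Ple EA CB e f).Nonempty then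
    EA.osub (CB.J h.some f) (CB.J h.some e)
  else EA.zero

noncomputable def projCover (a : E) : E :=
  if h : ∃ p, IsProjCover EA CB a p then h.choose else EA.zero

def IsMeetP (p q m : E) : Prop :=
  m ∈ CB.P ∧ EA.le m p ∧ EA.le m q ∧ ∀ s ∈ CB.P, EA.le s p → EA.le s q → EA.le s m

/-- `p ∧ q` in `P`. -/
noncomputable def pmeet (p q : E) : E :=
  if h : ∃ m, IsMeetP EA CB p q m then h.choose else EA.zero

/-- infimum of a set of projections in `P`. -/
def IsInfP (S : Set E) (m : E) : Prop :=
  m ∈ CB.P ∧ (∀ s ∈ S, EA.le m s) ∧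
    ∀ t ∈ CB.P, (∀ s ∈ S, EA.le t s) → EA.le t m

/-! Relative (to a projection `q`, i.e. computed in the interval `[0,q]`) notions. -/

def Pq (q : E) : Set E := {p | p ∈ CB.P ∧ EA.le p q}

def inCq (q a p : E) : Prop :=
  EA.padd (CB.J p a) (CB.J (EA.osub q p) a) = some a

def PCq (q a : E) : Set E := {p | p ∈ Pq EA CB q ∧ inCq EA CB q a p}

def bicommq (q a : E) : Set E :=
  {p | p ∈ PCq EA CB q a ∧ ∀ r ∈ PCq EA CB q a, inCq EA CB q p r}

def PCsetq (q : E) (A : Set E) : Set E :=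
  {p | p ∈ Pq EA CB q ∧ ∀ a ∈ A, inCq EA CB q a p}

def Psetq (q : E) (Q : Set E) : Set E := PCsetq EA CB q (PCsetq EA CB q Q ∪ Q)

def Pleq (q e f : E) : Set E :=
  {p | p ∈ Psetq EA CB q {e, f} ∧ EA.le (CB.J p e) (CB.J p f) ∧
    EA.le (CB.J (EA.osub q p) f) (CB.J (EA.osub q p) e)}

noncomputable def posPartq (q e f : E) : E :=
  if h : (Pleq EA CB q e f).Nonempty then
    EA.osub (CB.J h.some f) (CB.J h.some e)
  else EA.zero

def IsProjCoverq (q a p : E) : Prop :=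
  p ∈ Pq EA CB q ∧ ∀ s ∈ Pq EA CB q, (EA.le a s ↔ EA.le p s)

noncomputable def projCoverq (q a : E) : E :=
  if h : ∃ p, IsProjCoverq EA CB q a p then h.choose else EA.zero

def Mackeyq (q a b : E) : Prop :=
  ∃ a1 b1 c d e, EA.padd a1 b1 = some d ∧ EA.padd d c = some e ∧ EA.le e q ∧
    EA.padd a1 c = some a ∧ EA.padd b1 c = some b

def SubEAq (q : E) (F : Set E) : Prop :=
  EA.zero ∈ F ∧ q ∈ F ∧ (∀ x ∈ F, EA.osub q x ∈ F) ∧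
    ∀ x ∈ F, ∀ y ∈ F, ∀ z, EA.padd x y = some z → EA.le z q → z ∈ F

def BooleanSubq (q : E) (B : Set E) : Prop :=
  B ⊆ Pq EA CB q ∧ SubEAq EA q B ∧
    ∀ p ∈ B, ∀ r ∈ B, ∃ p1 ∈ B, ∃ r1 ∈ B, ∃ c ∈ B, ∃ d e,
      EA.padd p1 r1 = some d ∧ EA.padd d c = some e ∧ EA.le e q ∧
      EA.padd p1 c = some p ∧ EA.padd r1 c = some r

def IsBElementq (q a : E) : Prop :=
  ∃ B, BooleanSubq EA CB q B ∧
    ∀ p ∈ Pq EA CB q, (inCq EA CB q a p ↔ ∀ b ∈ B, inCq EA CB q b p)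

def BPropertyq (q : E) : Prop := ∀ a : E, EA.le a q → IsBElementq EA CB q a

def CommuteElq (q e f : E) : Prop :=
  ∀ p ∈ bicommq EA CB q e, ∀ r ∈ bicommq EA CB q f, Mackeyq EA q p r

def BComparabilityq (q : E) : Prop :=
  BPropertyq EA CB q ∧ ∀ e f : E, EA.le e q → EA.le f q →
    CommuteElq EA CB q e f → (Pleq EA CB q e f).Nonempty

/-! The binary spectral resolution. -/

/-- `λ(w) = Σ_j w_j 2^{-j}` (head of the list is the first digit). -/
def lamOf : List Bool → ℚ
  | [] => 0
  | b :: t => ((if b then 1 else 0) + lamOf t) / 2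

/-- all binary strings of length `n`, in lexicographic order. -/
def allStrings : ℕ → List (List Bool)
  | 0 => [[]]
  | n + 1 => (allStrings n).flatMap fun w => [w ++ [false], w ++ [true]]

noncomputable def listSum (l : List E) : E :=
  l.foldl (fun acc x => EA.oplusD acc x) EA.zero

/-- the families `(u_w, c_w)`; the binary string is given in reversed order
(head of the list is the last digit). -/
noncomputable def ucAux (a : E) : List Bool → E × E
  | [] => (projCover EA CB a, a)
  | bit :: t =>
      let p := ucAux a t
      let q := p.1
      let cw := p.2
      let cw' := EA.osub q cw
      let d := posPartq EA CB q cw' cw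
      let u0 := pmeet EA CB (EA.osub q (projCoverq EA CB q d)) q
      if bit then (pmeet EA CB q (EA.compl u0), d)
      else (u0, EA.oplusD (CB.J u0 cw) (CB.J u0 cw))

noncomputable def uw (a : E) (w : List Bool) : E := (ucAux EA CB a w.reverse).1

noncomputable def cw (a : E) (w : List Bool) : E := (ucAux EA CB a w.reverse).2

/-- the binary spectral projection `p_{a,λ(w1)}`. -/
noncomputable def pbin (a : E) (w : List Bool) : E :=
  listSum EA (EA.compl (projCover EA CB a) ::
    (((allStrings (w.length + 1)).filter
        fun v => lamOf v ≤ lamOf (w ++ [false])).map (uw EA CB a)))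

def Dyadic01 (x : ℚ) : Prop := ∃ n k : ℕ, (k : ℚ) ≤ 2 ^ n ∧ x = (k : ℚ) / 2 ^ n

/-- the binary spectral resolution `p_{a,λ}`, for dyadic rationals `λ ∈ [0,1]`. -/
noncomputable def pdyad (a : E) (x : ℚ) : E :=
  if x ≤ 0 then EA.compl (projCover EA CB a)
  else if 1 ≤ x then EA.one
  else if h : ∃ w : List Bool, lamOf (w ++ [true]) = x then pbin EA CB a h.choose
  else EA.zero

/-- the rational spectral resolution `p_{a,λ} = ⋀_{μ > λ, μ dyadic} p_{a,μ}`. -/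
noncomputable def ratRes (a : E) (x : ℚ) : E :=
  if h : ∃ m, IsInfP EA CB {y | ∃ μ, Dyadic01 μ ∧ x < μ ∧ y = pdyad EA CB a μ} m
  then h.choose else EA.zero

/-- the partial maps `f_0(b) = 2b`, `f_1(b) = (2b')'` computed in `[0,uu]`. -/
noncomputable def fstep (uu b : E) (bit : Bool) : Option E :=
  if bit then
    (if EA.le (EA.osub uu b) b
      then some (EA.osub uu (EA.oplusD (EA.osub uu b) (EA.osub uu b))) else none)
  else
    (if EA.le b (EA.osub uu b) then some (EA.oplusD b b) else none)

/-- `f_w = f_{w_n} ∘ ⋯ ∘ f_{w_1}`, computed in `[0,uu]`, as a partial map. -/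
noncomputable def fword (uu : E) (w : List Bool) (b : E) : Option E :=
  w.foldl (fun ob bit => ob.bind fun x => fstep EA uu x bit) (some b)

end EffectAlgebra

namespace EffectAlgebra

/-- a maximal set of pairwise commuting elements of `E`. -/
def MaxCommuting {E : Type u} (EA : EffectAlgebra E) (CB : CompressionBase EA)
    (M : Set E) : Prop :=
  (∀ a ∈ M, ∀ b ∈ M, CommuteEl EA CB a b) ∧
    ∀ M' : Set E, (∀ a ∈ M', ∀ b ∈ M', CommuteEl EA CB a b) → M ⊆ M' → M' = M

end EffectAlgebra

namespace EffectAlgebra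

variable {E : Type u} (EA : EffectAlgebra E)

theorem compl_spec' (a : E) : EA.padd a (EA.compl a) = some EA.one :=
  (EA.orth_exists a).choose_spec

theorem compl_compl' (a : E) : EA.compl (EA.compl a) = a := by
  have h1 := compl_spec' EA (EA.compl a)
  have h2 : EA.padd (EA.compl a) a = some EA.one := by
    rw [EA.comm]; exact compl_spec' EA a
  exact EA.orth_unique (EA.compl a) _ _ h1 h2

theorem padd_zero' (a : E) : EA.padd a EA.zero = some a := by
  have hone : EA.padd EA.one EA.zero = some EA.one := by
    obtain ⟨x, hx⟩ := EA.orth_exists EA.one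
    have hx' : EA.padd x EA.one = some EA.one := by rw [EA.comm]; exact hx
    have h0 := EA.add_one x EA.one hx'
    rw [h0] at hx; exact hx
  have key : ∀ b : E, EA.padd (EA.compl b) EA.zero = some (EA.compl b) := by
    intro b
    obtain ⟨bc, hbc, h2⟩ := EA.assoc b (EA.compl b) EA.zero EA.one EA.one
      (compl_spec' EA b) hone
    have : EA.compl b = bc := EA.orth_unique b _ _ (compl_spec' EA b) h2
    rw [← this] at hbc; exact hbc
  have := key (EA.compl a)
  rwa [compl_compl' EA a] at this

theorem zero_padd' (a : E) : EA.padd EA.zero a = some a := by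
  rw [EA.comm]; exact padd_zero' EA a

theorem le_refl' (a : E) : EA.le a a := ⟨EA.zero, padd_zero' EA a⟩

theorem assoc'' (a b c bc e : E) (h1 : EA.padd b c = some bc)
    (h2 : EA.padd a bc = some e) :
    ∃ ab, EA.padd a b = some ab ∧ EA.padd ab c = some e := by
  have h2' : EA.padd bc a = some e := by rw [EA.comm]; exact h2
  obtain ⟨ca, hca, h3⟩ := EA.assoc b c a bc e h1 h2'
  have h3' : EA.padd ca b = some e := by rw [EA.comm]; exact h3
  obtain ⟨ab, hab, h4⟩ := EA.assoc c a b ca e hca h3'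
  exact ⟨ab, hab, by rw [EA.comm]; exact h4⟩

theorem le_padd' {a b c e : E} (hab : EA.le a b) (h : EA.padd b c = some e) :
    ∃ f, EA.padd a c = some f := by
  obtain ⟨x, hx⟩ := hab
  have hx' : EA.padd x a = some b := by rw [EA.comm]; exact hx
  obtain ⟨ac, hac, _⟩ := EA.assoc x a c b e hx' h
  exact ⟨ac, hac⟩

theorem le_compl_of_padd' {a b e : E} (h : EA.padd a b = some e) :
    EA.le a (EA.compl b) := by
  have h' : EA.padd b a = some e := by rw [EA.comm]; exact h
  obtain ⟨f, hf, h2⟩ := EA.assoc b a (EA.compl e) e EA.one h' (compl_spec' EA e)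
  have : EA.compl b = f := EA.orth_unique b _ _ (compl_spec' EA b) h2
  exact ⟨EA.compl e, by rw [this]; exact hf⟩

theorem mackey_symm' {a b : E} (h : EA.Mackey a b) : EA.Mackey b a := by
  obtain ⟨a1, b1, c, d, e, hd, he, ha, hb⟩ := h
  exact ⟨b1, a1, c, d, e, by rw [EA.comm]; exact hd, he, hb, ha⟩

theorem mackey_refl' (a : E) : EA.Mackey a a :=
  ⟨EA.zero, EA.zero, a, EA.zero, a, padd_zero' EA EA.zero, zero_padd' EA a,
    zero_padd' EA a, zero_padd' EA a⟩

variable (CB : CompressionBase EA)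

theorem J_one' {p : E} (hp : p ∈ CB.P) : CB.J p EA.one = p := CB.focus p hp

theorem J_add' {p : E} (hp : p ∈ CB.P) {a b c : E} (h : EA.padd a b = some c) :
    EA.padd (CB.J p a) (CB.J p b) = some (CB.J p c) :=
  (CB.compr p hp).1.1 a b c h

theorem J_fix' {p : E} (hp : p ∈ CB.P) {a : E} (h : EA.le a p) : CB.J p a = a :=
  (CB.compr p hp).1.2 a (by rw [J_one' EA CB hp]; exact h)

theorem J_zero' {p : E} (hp : p ∈ CB.P) {a : E} (h : EA.le a (EA.compl p)) :
    CB.J p a = EA.zero :=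
  ((CB.compr p hp).2 a).mpr (by rw [J_one' EA CB hp]; exact h)

theorem J_le' {p : E} (hp : p ∈ CB.P) (a : E) : EA.le (CB.J p a) p := by
  have := J_add' EA CB hp (compl_spec' EA a)
  rw [J_one' EA CB hp] at this
  exact ⟨CB.J p (EA.compl a), this⟩

theorem complP' {p : E} (hp : p ∈ CB.P) : EA.compl p ∈ CB.P := CB.sub.2.2.1 p hp

/-- Mackey compatible projections commute. -/
theorem mackey_inC' {p q : E} (hp : p ∈ CB.P) (h : EA.Mackey p q) :
    inC EA CB q p := by
  obtain ⟨p1, q1, c, d, e, hd, he, hp1c, hq1c⟩ := h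
  have hcp : EA.le c p := ⟨p1, by rw [EA.comm]; exact hp1c⟩
  have hd' : EA.padd q1 p1 = some d := by rw [EA.comm]; exact hd
  obtain ⟨p', hp'1, hp'2⟩ := EA.assoc q1 p1 c d e hd' he
  have hpp : p' = p := by
    rw [hp1c] at hp'1; exact (Option.some_injective _ hp'1).symm
  rw [hpp] at hp'2
  have hq1cp : EA.le q1 (EA.compl p) := le_compl_of_padd' EA hp'2
  have hJpq1 : CB.J p q1 = EA.zero := J_zero' EA CB hp hq1cp
  have hJpc : CB.J p c = c := J_fix' EA CB hp hcp
  have hJpq : CB.J p q = c := by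
    have := J_add' EA CB hp hq1c
    rw [hJpq1, hJpc, zero_padd' EA c] at this
    exact (Option.some_injective _ this).symm
  have hp'P : EA.compl p ∈ CB.P := complP' EA CB hp
  have hJp'q1 : CB.J (EA.compl p) q1 = q1 := J_fix' EA CB hp'P hq1cp
  have hJp'c : CB.J (EA.compl p) c = EA.zero := by
    refine J_zero' EA CB hp'P ?_
    rw [compl_compl' EA p]; exact hcp
  have hJp'q : CB.J (EA.compl p) q = q1 := by
    have := J_add' EA CB hp'P hq1c
    rw [hJp'q1, hJp'c, padd_zero' EA q1] at this
    exact (Option.some_injective _ this).symm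
  show EA.padd (CB.J p q) (CB.J (EA.compl p) q) = some q
  rw [hJpq, hJp'q, EA.comm]; exact hq1c

theorem inC_mackey' {x p : E} (hp : p ∈ CB.P) (h : inC EA CB x p) :
    EA.Mackey x p := by
  have h' : EA.padd (CB.J p x) (CB.J (EA.compl p) x) = some x := h
  set c := CB.J p x with hc
  set a1 := CB.J (EA.compl p) x with ha1
  obtain ⟨b1, hb1⟩ := J_le' EA CB hp x
  have ha1le : EA.le a1 (EA.compl p) := J_le' EA CB (complP' EA CB hp) x
  have hpp : EA.padd (EA.compl p) p = some EA.one := by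
    rw [EA.comm]; exact compl_spec' EA p
  obtain ⟨e, he⟩ := le_padd' EA ha1le hpp
  have hb1c : EA.padd b1 c = some p := by rw [EA.comm]; exact hb1
  obtain ⟨d, hd, hdc⟩ := assoc'' EA a1 b1 c p e hb1c he
  exact ⟨a1, b1, c, d, e, hd, hdc, by rw [EA.comm]; exact h', hb1c⟩

theorem inC_self' {p : E} (hp : p ∈ CB.P) : inC EA CB p p := by
  have h1 : CB.J p p = p := J_fix' EA CB hp (le_refl' EA p)
  have h2 : CB.J (EA.compl p) p = EA.zero := by
    refine J_zero' EA CB (complP' EA CB hp) ?_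
    rw [compl_compl' EA p]; exact le_refl' EA p
  show EA.padd (CB.J p p) (CB.J (EA.compl p) p) = some p
  rw [h1, h2]; exact padd_zero' EA p

theorem self_mem_bicomm' {p : E} (hp : p ∈ CB.P) : p ∈ bicomm EA CB p :=
  ⟨⟨hp, inC_self' EA CB hp⟩, fun _ hq => hq.2⟩

theorem boolean_mackey' {B : Set E} (hB : BooleanSub EA CB B) {p q : E}
    (hp : p ∈ B) (hq : q ∈ B) : EA.Mackey p q := by
  obtain ⟨p1, _, q1, _, c, _, d, e, h1, h2, h3, h4⟩ := hB.2.2 p hp q hq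
  exact ⟨p1, q1, c, d, e, h1, h2, h3, h4⟩

theorem belem_bicomm' {a : E} {B : Set E} (hB : IsBElementWith EA CB a B) :
    B ⊆ bicomm EA CB a := by
  intro b hb
  have hbP : b ∈ CB.P := hB.1.1 hb
  refine ⟨⟨hbP, (hB.2 b hbP).mpr ?_⟩, ?_⟩
  · intro b' hb'
    exact mackey_inC' EA CB hbP (boolean_mackey' EA CB hB.1 hb hb')
  · intro q hq
    exact (hB.2 q hq.1).mp hq.2 b hb

theorem block_sub_cblock' {B : Set E} (hB : IsBlock EA CB B) :
    B ⊆ Cblock EA CB B := by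
  intro p hp q hq
  exact mackey_inC' EA CB (hB.1 hq) (mackey_symm' EA (hB.2.1 p hp q hq))

theorem block_bicomm_sub' {B : Set E} (hB : IsBlock EA CB B) {a : E}
    (ha : a ∈ Cblock EA CB B) : bicomm EA CB a ⊆ B := by
  intro p hp
  have hpP : p ∈ CB.P := hp.1.1
  have hsub : B ∪ {p} ⊆ CB.P := by
    intro x hx
    rcases hx with hx | hx
    · exact hB.1 hx
    · rw [hx]; exact hpP
  have hmp : ∀ x ∈ B, EA.Mackey x p := by
    intro x hx
    have : inC EA CB p x := hp.2 x ⟨hB.1 hx, ha x hx⟩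
    exact mackey_symm' EA (inC_mackey' EA CB (hB.1 hx) this)
  have hpair : ∀ x ∈ B ∪ {p}, ∀ y ∈ B ∪ {p}, EA.Mackey x y := by
    intro x hx y hy
    rcases hx with hx | hx <;> rcases hy with hy | hy
    · exact hB.2.1 x hx y hy
    · rw [Set.mem_singleton_iff] at hy; rw [hy]; exact hmp x hx
    · rw [Set.mem_singleton_iff] at hx; rw [hx]
      exact mackey_symm' EA (hmp y hy)
    · rw [Set.mem_singleton_iff] at hx hy; rw [hx, hy]; exact mackey_refl' EA p
  have heq := hB.2.2 (B ∪ {p}) hsub hpair Set.subset_union_left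
  rw [← heq]; exact Or.inr rfl

theorem block_cblock_comm' {B : Set E} (hB : IsBlock EA CB B) :
    ∀ a ∈ Cblock EA CB B, ∀ b ∈ Cblock EA CB B, CommuteEl EA CB a b := by
  intro a ha b hb p hp q hq
  exact hB.2.1 p (block_bicomm_sub' EA CB hB ha hp) q (block_bicomm_sub' EA CB hB hb hq)

end EffectAlgebra

open EffectAlgebra in
/-- if `E` has the b-property, the C-blocks of `E` coincide with the
maximal sets of pairwise commuting elements of `E`. -/
theorem statement5 {E : Type u} (EA : EffectAlgebra E) (CB : CompressionBase EA)
    (h : BProperty EA CB) :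
    (∀ B : Set E, IsBlock EA CB B → MaxCommuting EA CB (Cblock EA CB B)) ∧
    (∀ M : Set E, MaxCommuting EA CB M →
      ∃ B : Set E, IsBlock EA CB B ∧ M = Cblock EA CB B) := by
  constructor
  · -- every C-block is a maximal commuting set
    intro B hB
    refine ⟨block_cblock_comm' EA CB hB, ?_⟩
    intro M' hM' hsub
    refine Set.Subset.antisymm ?_ hsub
    intro x hx p hpB
    obtain ⟨Bx, hBx⟩ := h x
    -- every element of Bx is Mackey compatible with every element of B
    have cross : ∀ b ∈ Bx, ∀ r ∈ B, EA.Mackey b r := by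
      intro b hb r hr
      have hrM : r ∈ M' := hsub (block_sub_cblock' EA CB hB hr)
      exact hM' x hx r hrM b (belem_bicomm' EA CB hBx hb) r
        (self_mem_bicomm' EA CB (hB.1 hr))
    have hBxB : Bx ⊆ B := by
      have hsubP : B ∪ Bx ⊆ CB.P := by
        intro y hy
        rcases hy with hy | hy
        · exact hB.1 hy
        · exact hBx.1.1 hy
      have hpair : ∀ y ∈ B ∪ Bx, ∀ z ∈ B ∪ Bx, EA.Mackey y z := by
        intro y hy z hz
        rcases hy with hy | hy <;> rcases hz with hz | hz
        · exact hB.2.1 y hy z hz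
        · exact mackey_symm' EA (cross z hz y hy)
        · exact cross y hy z hz
        · exact boolean_mackey' EA CB hBx.1 hy hz
      have heq := hB.2.2 (B ∪ Bx) hsubP hpair Set.subset_union_left
      intro b hb
      rw [← heq]; exact Or.inr hb
    refine (hBx.2 p (hB.1 hpB)).mpr ?_
    intro b hb
    exact mackey_inC' EA CB (hB.1 hpB) (hB.2.1 p hpB b (hBxB hb))
  · -- every maximal commuting set is a C-block
    intro M hM
    set S : Set E := ⋃ a ∈ M, bicomm EA CB a with hS
    have hSP : S ⊆ CB.P := by
      intro p hp
      simp only [hS, Set.mem_iUnion] at hp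
      obtain ⟨a, _, hp⟩ := hp
      exact hp.1.1
    have hSpair : ∀ p ∈ S, ∀ q ∈ S, EA.Mackey p q := by
      intro p hp q hq
      simp only [hS, Set.mem_iUnion] at hp hq
      obtain ⟨a, ha, hp⟩ := hp
      obtain ⟨b, hb, hq⟩ := hq
      exact hM.1 a ha b hb p hp q hq
    obtain ⟨Bm, hSB, hmax⟩ := zorn_subset_nonempty
      {T : Set E | T ⊆ CB.P ∧ ∀ p ∈ T, ∀ q ∈ T, EA.Mackey p q}
      (by
        intro c hc hchain _
        refine ⟨⋃₀ c, ⟨?_, ?_⟩, fun s hs => Set.subset_sUnion_of_mem hs⟩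
        · intro p hp
          obtain ⟨t, ht, hpt⟩ := hp
          exact (hc ht).1 hpt
        · intro p hp q hq
          obtain ⟨t1, ht1, hpt1⟩ := hp
          obtain ⟨t2, ht2, hqt2⟩ := hq
          rcases hchain.total ht1 ht2 with hle | hle
          · exact (hc ht2).2 p (hle hpt1) q hqt2
          · exact (hc ht1).2 p hpt1 q (hle hqt2))
      S ⟨hSP, hSpair⟩
    have hblock : IsBlock EA CB Bm := by
      refine ⟨hmax.prop.1, hmax.prop.2, ?_⟩
      intro B' hB'P hB'pair hsub
      exact Set.Subset.antisymm (hmax.2 ⟨hB'P, hB'pair⟩ hsub) hsub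
    have hMC : M ⊆ Cblock EA CB Bm := by
      intro x hx p hpB
      obtain ⟨Bx, hBx⟩ := h x
      have hBxBm : Bx ⊆ Bm := by
        intro b hb
        refine hSB ?_
        simp only [hS, Set.mem_iUnion]
        exact ⟨x, hx, belem_bicomm' EA CB hBx hb⟩
      refine (hBx.2 p (hmax.prop.1 hpB)).mpr ?_
      intro b hb
      exact mackey_inC' EA CB (hmax.prop.1 hpB)
        (hmax.prop.2 p hpB b (hBxBm hb))
    refine ⟨Bm, hblock, ?_⟩
    exact (hM.2 (Cblock EA CB Bm) (block_cblock_comm' EA CB hblock) hMC).symm
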